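/- Let K be a symmetric invertible r×r integer matrix with even diagonal entries, M ≥ 1 an integer, and s ∈ ℤ^r. Assume the quotient ℤ^r/Kℤ^r is the internal direct sum of cyclic subgroups generated by the classes of a₁,…,a_k ∈ ℤ^r, where the class of a_i has order n_i and n_i·a_i = K·w_i with w_i ∈ ℤ^r. Set d_i = gcd(M, n_i). Then the image of the homomorphism u ↦ exp(2πi·sᵀK⁻¹u)·exp(iπ·M·uᵀK⁻¹u) on {u ∈ ℤ^r : M·u ∈ Kℤ^r} is a finite cyclic subgroup of the circle group of order P = lcm_{1≤i≤k} ( 2d_i / gcd(2d_i, 2·sᵀw_i + (M/d_i)·wᵢᵀK w_i) ). -/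

import Mathlib

noncomputable section

/-- The rational quadratic form `aᵀ K⁻¹ b` (computed over `ℝ`) attached to an integer
matrix `K`. -/
def qform (r : ℕ) (K : Matrix (Fin r) (Fin r) ℤ) (a b : Fin r → ℤ) : ℝ :=
  ∑ i : Fin r, ∑ j : Fin r,
    (a i : ℝ) * ((K.map (fun n : ℤ => (n : ℝ)))⁻¹ i j) * (b j : ℝ)

/-- The relabeling phase `f(u) = exp(2πi sᵀK⁻¹u) · exp(iπ M uᵀK⁻¹u)`. -/
def phaseF (r : ℕ) (K : Matrix (Fin r) (Fin r) ℤ) (M : ℕ) (s : Fin r → ℤ)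
    (u : Fin r → ℤ) : ℂ :=
  Complex.exp (2 * (Real.pi : ℂ) * Complex.I * (qform r K s u : ℝ)) *
    Complex.exp ((Real.pi : ℂ) * Complex.I * (M : ℂ) * (qform r K u u : ℝ))

/-- The anyon quotient `ℤ^r / K ℤ^r`. -/
abbrev KQuot (r : ℕ) (K : Matrix (Fin r) (Fin r) ℤ) : Type :=
  (Fin r → ℤ) ⧸ LinearMap.range (Matrix.mulVecLin K)

/-!
For `u` with `M • u = K w'` the phase is `exp(2πi s·w'/M) · exp(πi u·w')`. Symmetry of `K`
makes it additive on the lattice `T` of such `u`, and the even diagonal makes it trivial on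
`Kℤ^r`, so it is a character of `T / Kℤ^r`, the `M`-torsion of `ℤ^r/Kℤ^r`. That torsion subgroup
is generated by the classes of `(nᵢ/dᵢ) • aᵢ`, whose phases are `exp(2πi tᵢ/(2dᵢ))` with
`tᵢ = 2 sᵀwᵢ + (M/dᵢ) wᵢᵀKwᵢ`: primitive roots of unity of order `pᵢ = 2dᵢ / gcd(2dᵢ, tᵢ)`.
Finally, the subgroup of `ℂˣ` generated by elements of orders `pᵢ` lies in the `P`-th roots of
unity, `P = lcm pᵢ`, and its order is divisible by every `pᵢ`, hence by `P`, which bounds the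
number of `P`-th roots of unity; so the two coincide.
-/

open Matrix Complex Real Finset

theorem Nat.div_intGcd_ne_zero {N : ℕ} (hN : N ≠ 0) (t : ℤ) : N / Int.gcd N t ≠ 0 :=
  Nat.div_ne_zero_iff.mpr ⟨(Int.gcd_pos_of_ne_zero_left _ (by exact_mod_cast hN)).ne',
    by exact_mod_cast Int.gcd_le_left (a := N) t (by omega)⟩

theorem Complex.isPrimitiveRoot_exp_int_div {N : ℕ} (hN : N ≠ 0) (t : ℤ) :
    IsPrimitiveRoot (cexp (2 * π * I * t / N)) (N / Int.gcd N t) := by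
  have hp0 := Nat.div_intGcd_ne_zero hN t
  have hg : 0 < Int.gcd N t := Int.gcd_pos_of_ne_zero_left _ (by exact_mod_cast hN)
  obtain ⟨N', t', hcop, hN', ht'⟩ := Int.exists_gcd_one hg
  generalize Int.gcd N t = g at hg hN' ht' hp0 ⊢
  have hg' : (0 : ℤ) < g := by exact_mod_cast hg
  lift N' to ℕ using by nlinarith [Int.natCast_nonneg N] with p
  have hNp : N = p * g := by exact_mod_cast hN'
  subst hNp ht'
  rw [Nat.mul_div_cancel _ hg] at hp0 ⊢
  have hexp : cexp (2 * π * I * ↑(t' * g) / ↑(p * g)) = cexp (2 * π * I / p) ^ t' := by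
    rw [← Complex.exp_int_mul]
    congr 1
    have : (g : ℂ) ≠ 0 := by exact_mod_cast hg.ne'
    push_cast
    field_simp
  rw [hexp]
  exact (Complex.isPrimitiveRoot_exp _ hp0).zpow_of_gcd_eq_one t' (by rwa [Int.gcd_comm])

theorem IsPrimitiveRoot.closure_range_eq_rootsOfUnity_lcm {R ι : Type*} [CommRing R]
    [IsDomain R] [Fintype ι] {ζ : ι → Rˣ} {p : ι → ℕ} (hζ : ∀ i, IsPrimitiveRoot (ζ i) (p i))
    (hp : ∀ i, p i ≠ 0) :
    Subgroup.closure (Set.range ζ) = rootsOfUnity (univ.lcm p) R := by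
  have : NeZero (univ.lcm p) := ⟨by simp [Finset.lcm_eq_zero_iff, hp]⟩
  have hle : Subgroup.closure (Set.range ζ) ≤ rootsOfUnity (univ.lcm p) R := by
    rw [Subgroup.closure_le]
    rintro _ ⟨i, rfl⟩
    exact (_root_.mem_rootsOfUnity _ _).mpr
      ((hζ i).pow_eq_one_iff_dvd _ |>.mpr (Finset.dvd_lcm (mem_univ i)))
  have : Finite (Subgroup.closure (Set.range ζ)) :=
    Finite.of_injective _ (Subgroup.inclusion_injective hle)
  refine Subgroup.eq_of_le_of_card_ge hle
    ((_root_.card_rootsOfUnity R _).trans (Nat.le_of_dvd Nat.card_pos (lcm_dvd fun i _ => ?_)))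
  have hmem : ζ i ∈ Subgroup.closure (Set.range ζ) := Subgroup.subset_closure ⟨i, rfl⟩
  rw [(hζ i).eq_orderOf, ← Subgroup.orderOf_mk (ζ i) hmem]
  exact orderOf_dvd_natCard _

theorem IsPrimitiveRoot.exists_eq_prod_zpow_iff_pow_lcm_eq_one {F ι : Type*} [Field F]
    [Fintype ι] {ζ : ι → F} {p : ι → ℕ} (hζ : ∀ i, IsPrimitiveRoot (ζ i) (p i))
    (hp : ∀ i, p i ≠ 0) (x : F) :
    (∃ e : ι → ℤ, x = ∏ i, ζ i ^ e i) ↔ x ^ univ.lcm p = 1 := by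
  let u : ι → Fˣ := fun i => Units.mk0 (ζ i) ((hζ i).ne_zero (hp i))
  have hu : ∀ i, IsPrimitiveRoot (u i) (p i) := fun i => IsPrimitiveRoot.coe_units_iff.mp (hζ i)
  have hL : univ.lcm p ≠ 0 := by simp [Finset.lcm_eq_zero_iff, hp]
  constructor
  · rintro ⟨e, rfl⟩
    have := (closure_range_eq_rootsOfUnity_lcm hu hp).le
      (Subgroup.mem_closure_range_iff_of_fintype.mpr ⟨e, rfl⟩)
    rw [_root_.mem_rootsOfUnity, Units.ext_iff] at this
    simpa [u] using this
  · intro hx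
    let y : Fˣ := (IsUnit.of_pow_eq_one hx hL).unit
    have hy : y ∈ rootsOfUnity (univ.lcm p) F := by
      rw [_root_.mem_rootsOfUnity, Units.ext_iff]; simpa [y] using hx
    rw [← closure_range_eq_rootsOfUnity_lcm hu hp, Subgroup.mem_closure_range_iff_of_fintype] at hy
    obtain ⟨e, he⟩ := hy
    refine ⟨e, ?_⟩
    simpa [y, u, Units.ext_iff] using he

theorem Int.natCast_div_gcd_dvd_of_dvd_mul {M n : ℕ} {c : ℤ} (hM : M ≠ 0)
    (h : (n : ℤ) ∣ M * c) : ((n / Nat.gcd M n : ℕ) : ℤ) ∣ c := by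
  have hg : 0 < Nat.gcd M n := Nat.gcd_pos_of_pos_left _ (Nat.pos_of_ne_zero hM)
  have hcop := (Nat.coprime_div_gcd_div_gcd hg).symm.isCoprime
  refine hcop.dvd_of_dvd_mul_left ?_
  have hg' : (Nat.gcd M n : ℤ) ≠ 0 := by exact_mod_cast hg.ne'
  rw [← mul_dvd_mul_iff_left hg', ← mul_assoc]
  rwa [← Nat.cast_mul, ← Nat.cast_mul, Nat.mul_div_cancel' (Nat.gcd_dvd_left M n),
    Nat.mul_div_cancel' (Nat.gcd_dvd_right M n)]

theorem exists_eq_sum_zsmul_of_nsmul_eq_zero {A ι : Type*} [AddCommGroup A] [Fintype ι]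
    {α : ι → A} {n : ι → ℕ} (hgen : ∀ x : A, ∃ c : ι → ℤ, x = ∑ i, c i • α i)
    (hindep : ∀ c : ι → ℤ, ∑ i, c i • α i = 0 → ∀ i, (n i : ℤ) ∣ c i)
    {M : ℕ} (hM : M ≠ 0) {x : A} (hx : M • x = 0) :
    ∃ e : ι → ℤ, x = ∑ i, e i • (n i / Nat.gcd M (n i)) • α i := by
  obtain ⟨c, rfl⟩ := hgen x
  have hdvd : ∀ i, (n i : ℤ) ∣ M * c i := hindep _ <| by
    simpa [Finset.smul_sum, mul_smul] using hx
  choose e he using fun i => Int.natCast_div_gcd_dvd_of_dvd_mul hM (hdvd i)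
  refine ⟨e, Finset.sum_congr rfl fun i _ => ?_⟩
  rw [he i, mul_comm, mul_smul, natCast_zsmul]

theorem AddChar.map_sum_eq_prod {ι A R : Type*} [AddCommMonoid A] [CommMonoid R]
    (ψ : AddChar A R) (s : Finset ι) (f : ι → A) : ψ (∑ i ∈ s, f i) = ∏ i ∈ s, ψ (f i) :=
  map_prod ψ.toMonoidHom (Multiplicative.ofAdd ∘ f) s

section

variable {r : ℕ} {K : Matrix (Fin r) (Fin r) ℤ}

theorem qform_eq_div_of_nsmul_eq_mulVec (hdet : K.det ≠ 0) {N : ℕ} (hN : N ≠ 0)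
    (a : Fin r → ℤ) {u w : Fin r → ℤ} (h : N • u = K *ᵥ w) :
    qform r K a u = (a ⬝ᵥ w : ℤ) / N := by
  set A := K.map (Int.cast : ℤ → ℝ)
  have hA : IsUnit A.det := by
    rw [isUnit_iff_ne_zero, ← Int.cast_det]; exact_mod_cast hdet
  have hcast : (N : ℝ) • (Int.cast ∘ u) = A *ᵥ (Int.cast ∘ w) := by
    funext i
    simpa using (congrArg (Int.cast : ℤ → ℝ) (congrFun h i)).trans
      (RingHom.map_mulVec (Int.castRingHom ℝ) K w i)
  have hinv : A⁻¹ *ᵥ (Int.cast ∘ u) = (N : ℝ)⁻¹ • (Int.cast ∘ w) := by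
    rw [eq_inv_smul_iff₀ (by exact_mod_cast hN), ← mulVec_smul, hcast, mulVec_mulVec,
      nonsing_inv_mul _ hA, one_mulVec]
  have hq : qform r K a u = (Int.cast ∘ a) ⬝ᵥ (A⁻¹ *ᵥ (Int.cast ∘ u)) := by
    simp [qform, dotProduct, mulVec, Finset.mul_sum, mul_assoc, A]
  rw [hq, hinv, dotProduct_smul, smul_eq_mul, inv_mul_eq_div]
  simp [dotProduct]

theorem dotProduct_eq_of_nsmul_eq_mulVec (hsymm : K.IsSymm) {M : ℕ} (hM : M ≠ 0)
    {u v wu wv : Fin r → ℤ} (hu : M • u = K *ᵥ wu) (hv : M • v = K *ᵥ wv) :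
    u ⬝ᵥ wv = v ⬝ᵥ wu := by
  have hM' : (M : ℤ) ≠ 0 := by exact_mod_cast hM
  apply mul_left_cancel₀ hM'
  calc (M : ℤ) * (u ⬝ᵥ wv) = (K *ᵥ wu) ⬝ᵥ wv := by
        rw [← hu, ← Nat.cast_smul_eq_nsmul ℤ, smul_dotProduct, smul_eq_mul]
    _ = (K *ᵥ wv) ⬝ᵥ wu := by
        rw [dotProduct_comm, dotProduct_mulVec, ← mulVec_transpose, hsymm.eq]
    _ = (M : ℤ) * (v ⬝ᵥ wu) := by
        rw [← hv, ← Nat.cast_smul_eq_nsmul ℤ, smul_dotProduct, smul_eq_mul]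

theorem even_dotProduct_mulVec_self (hsymm : K.IsSymm) (heven : ∀ i, Even (K i i))
    (x : Fin r → ℤ) : Even (x ⬝ᵥ (K *ᵥ x)) := by
  let L : Matrix (Fin r) (Fin r) ℤ := Matrix.of fun i j =>
    if i < j then K i j else if i = j then K i i / 2 else 0
  have hK : K = L + Lᵀ := by
    ext i j
    simp only [L, Matrix.add_apply, transpose_apply, of_apply]
    rcases lt_trichotomy i j with h | rfl | h
    · simp [h, h.ne', not_lt_of_gt h]
    · obtain ⟨m, hm⟩ := heven i
      simp only [lt_self_iff_false, if_false, if_true]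
      omega
    · simp [h, h.ne', not_lt_of_gt h, hsymm.apply i j]
  refine ⟨x ⬝ᵥ (L *ᵥ x), ?_⟩
  rw [hK, add_mulVec, dotProduct_add, mulVec_transpose, dotProduct_mulVec, dotProduct_comm x]

theorem phaseF_eq_of_nsmul_eq_mulVec (hdet : K.det ≠ 0) {M : ℕ} (hM : M ≠ 0)
    (s : Fin r → ℤ) {u w : Fin r → ℤ} (h : M • u = K *ᵥ w) :
    phaseF r K M s u =
      cexp (2 * π * I * ((s ⬝ᵥ w : ℤ) / M)) * cexp (π * I * (u ⬝ᵥ w : ℤ)) := by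
  have hM' : (M : ℂ) ≠ 0 := by exact_mod_cast hM
  rw [phaseF, qform_eq_div_of_nsmul_eq_mulVec hdet hM s h,
    qform_eq_div_of_nsmul_eq_mulVec hdet hM u h]
  push_cast
  field_simp

theorem phaseF_add (hsymm : K.IsSymm) (hdet : K.det ≠ 0) {M : ℕ} (hM : M ≠ 0)
    (s : Fin r → ℤ) {u v wu wv : Fin r → ℤ} (hu : M • u = K *ᵥ wu) (hv : M • v = K *ᵥ wv) :
    phaseF r K M s (u + v) = phaseF r K M s u * phaseF r K M s v := by
  have huv : M • (u + v) = K *ᵥ (wu + wv) := by rw [smul_add, hu, hv, mulVec_add]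
  have hcross := dotProduct_eq_of_nsmul_eq_mulVec hsymm hM hu hv
  rw [phaseF_eq_of_nsmul_eq_mulVec hdet hM s huv, phaseF_eq_of_nsmul_eq_mulVec hdet hM s hu,
    phaseF_eq_of_nsmul_eq_mulVec hdet hM s hv]
  simp only [← Complex.exp_add]
  refine Complex.exp_eq_exp_iff_exists_int.mpr ⟨u ⬝ᵥ wv, ?_⟩
  simp only [dotProduct_add, add_dotProduct]
  push_cast
  linear_combination (-π * I) * (congrArg (Int.cast : ℤ → ℂ) hcross)

theorem phaseF_mulVec (hsymm : K.IsSymm) (hdet : K.det ≠ 0) (heven : ∀ i, Even (K i i))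
    (M : ℕ) (s x : Fin r → ℤ) : phaseF r K M s (K *ᵥ x) = 1 := by
  have h : 1 • K *ᵥ x = K *ᵥ x := one_smul _ _
  obtain ⟨m, hm⟩ := even_dotProduct_mulVec_self hsymm heven x
  rw [phaseF, qform_eq_div_of_nsmul_eq_mulVec hdet one_ne_zero s h,
    qform_eq_div_of_nsmul_eq_mulVec hdet one_ne_zero _ h, dotProduct_comm (K *ᵥ x), hm,
    ← Complex.exp_add]
  refine Complex.exp_eq_one_iff.mpr ⟨s ⬝ᵥ x + M * m, ?_⟩
  push_cast
  ring

theorem phaseF_nsmul_div_gcd (hdet : K.det ≠ 0) {M n : ℕ} (hM : M ≠ 0) (s : Fin r → ℤ)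
    {a w : Fin r → ℤ} (hKw : n • a = K *ᵥ w) :
    phaseF r K M s ((n / Nat.gcd M n) • a) =
      cexp (2 * π * I * ((2 * (s ⬝ᵥ w) + (M / Nat.gcd M n : ℕ) * (w ⬝ᵥ (K *ᵥ w)) : ℤ) : ℂ) /
        (2 * Nat.gcd M n : ℕ)) := by
  have hd : Nat.gcd M n ≠ 0 := Nat.gcd_ne_zero_left hM
  obtain ⟨μ, hμ⟩ := Nat.gcd_dvd_left M n
  obtain ⟨m, hm⟩ := Nat.gcd_dvd_right M n
  have hμ' : M / Nat.gcd M n = μ := Nat.div_eq_of_eq_mul_right (Nat.pos_of_ne_zero hd) hμ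
  have hm' : n / Nat.gcd M n = m := Nat.div_eq_of_eq_mul_right (Nat.pos_of_ne_zero hd) hm
  rw [hμ', hm']
  generalize Nat.gcd M n = d at hd hμ hm
  subst hμ hm
  have h : d • m • a = K *ᵥ w := by rw [smul_smul, hKw]
  have hwKw : w ⬝ᵥ (K *ᵥ w) = (d * m : ℕ) * (a ⬝ᵥ w) := by
    rw [← hKw, ← Nat.cast_smul_eq_nsmul ℤ, dotProduct_smul, smul_eq_mul, dotProduct_comm]
  rw [phaseF, qform_eq_div_of_nsmul_eq_mulVec hdet hd s h,
    qform_eq_div_of_nsmul_eq_mulVec hdet hd _ h, ← Complex.exp_add, hwKw,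
    ← Nat.cast_smul_eq_nsmul ℤ m, smul_dotProduct, smul_eq_mul]
  have hd' : (d : ℂ) ≠ 0 := by exact_mod_cast hd
  congr 1
  push_cast
  field_simp

theorem isPrimitiveRoot_phaseF_nsmul_div_gcd (hdet : K.det ≠ 0) {M n : ℕ} (hM : M ≠ 0)
    (s : Fin r → ℤ) {a w : Fin r → ℤ} (hKw : n • a = K *ᵥ w) :
    IsPrimitiveRoot (phaseF r K M s ((n / Nat.gcd M n) • a))
      (2 * Nat.gcd M n / Int.gcd (2 * (Nat.gcd M n : ℤ))
        (2 * (∑ j, s j * w j) +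
          ((M / Nat.gcd M n : ℕ) : ℤ) * (∑ j1, ∑ j2, w j1 * K j1 j2 * w j2))) := by
  have hwKw : ∑ j1, ∑ j2, w j1 * K j1 j2 * w j2 = w ⬝ᵥ (K *ᵥ w) := by
    simp [dotProduct, mulVec, Finset.mul_sum, mul_assoc]
  rw [phaseF_nsmul_div_gcd hdet hM s hKw, hwKw]
  exact_mod_cast Complex.isPrimitiveRoot_exp_int_div (by positivity) _

def torsionLattice (K : Matrix (Fin r) (Fin r) ℤ) (M : ℕ) : AddSubgroup (Fin r → ℤ) where
  carrier := {u | ∃ w, M • u = K *ᵥ w}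
  add_mem' := by
    rintro u v ⟨wu, hu⟩ ⟨wv, hv⟩
    exact ⟨wu + wv, by rw [smul_add, hu, hv, mulVec_add]⟩
  zero_mem' := ⟨0, by simp⟩
  neg_mem' := by
    rintro u ⟨w, hw⟩
    exact ⟨-w, by rw [smul_neg, hw, mulVec_neg]⟩

theorem nsmul_div_gcd_mem_torsionLattice (M : ℕ) {n : ℕ} {a w : Fin r → ℤ}
    (hKw : n • a = K *ᵥ w) : (n / Nat.gcd M n) • a ∈ torsionLattice K M := by
  refine ⟨(M / Nat.gcd M n) • w, ?_⟩
  rw [mulVec_smul, ← hKw, smul_smul, smul_smul, ← Nat.mul_div_assoc _ (Nat.gcd_dvd_right M n),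
    Nat.div_mul_right_comm (Nat.gcd_dvd_left M n)]

def phaseChar (hsymm : K.IsSymm) (hdet : K.det ≠ 0) {M : ℕ} (hM : M ≠ 0) (s : Fin r → ℤ) :
    AddChar (torsionLattice K M) ℂ where
  toFun u := phaseF r K M s u
  map_zero_eq_one' := by simp [phaseF, qform]
  map_add_eq_mul' := by
    rintro ⟨u, wu, hu⟩ ⟨v, wv, hv⟩
    exact phaseF_add hsymm hdet hM s hu hv

theorem phaseChar_apply (hsymm : K.IsSymm) (hdet : K.det ≠ 0) {M : ℕ} (hM : M ≠ 0)
    (s : Fin r → ℤ) (u : torsionLattice K M) : phaseChar hsymm hdet hM s u = phaseF r K M s u :=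
  rfl

theorem exists_phaseF_eq_iff_exists_prod_zpow (hsymm : K.IsSymm) (hdet : K.det ≠ 0)
    (heven : ∀ i, Even (K i i)) {M : ℕ} (hM : M ≠ 0) (s : Fin r → ℤ) {k : ℕ}
    {a w : Fin k → Fin r → ℤ} {n : Fin k → ℕ} (hKw : ∀ i, n i • a i = K *ᵥ w i)
    (hgen : ∀ x : KQuot r K, ∃ c : Fin k → ℤ,
      x = ∑ i, c i • (Submodule.Quotient.mk (a i) : KQuot r K))
    (hindep : ∀ c : Fin k → ℤ,
      ∑ i, c i • (Submodule.Quotient.mk (a i) : KQuot r K) = 0 → ∀ i, (n i : ℤ) ∣ c i)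
    (z : ℂ) :
    (∃ u, (∃ w', M • u = K *ᵥ w') ∧ z = phaseF r K M s u) ↔
      ∃ e : Fin k → ℤ, z = ∏ i, phaseF r K M s ((n i / Nat.gcd M (n i)) • a i) ^ e i := by
  let χ := phaseChar hsymm hdet hM s
  let b : Fin k → torsionLattice K M := fun i =>
    ⟨_, nsmul_div_gcd_mem_torsionLattice M (hKw i)⟩
  have hχb : ∀ e : Fin k → ℤ,
      ∏ i, phaseF r K M s ((n i / Nat.gcd M (n i)) • a i) ^ e i = χ (∑ i, e i • b i) := by
    intro e
    simp only [AddChar.map_sum_eq_prod, AddChar.map_zsmul_eq_zpow, χ, phaseChar_apply, b]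
  constructor
  · rintro ⟨u, ⟨w', hw'⟩, rfl⟩
    let q := (LinearMap.range K.mulVecLin).mkQ
    obtain ⟨e, he⟩ := exists_eq_sum_zsmul_of_nsmul_eq_zero hgen hindep hM (x := q u) <| by
      rw [← map_nsmul, hw', Submodule.mkQ_apply, Submodule.Quotient.mk_eq_zero]
      exact ⟨w', rfl⟩
    obtain ⟨v, hv⟩ : u - ↑(∑ i, e i • b i) ∈ LinearMap.range K.mulVecLin := by
      rw [← Submodule.ker_mkQ (LinearMap.range K.mulVecLin), LinearMap.mem_ker, map_sub]
      change q u - q _ = 0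
      rw [he, sub_eq_zero]
      simp only [q, b, AddSubgroup.val_finsetSum, AddSubgroup.coe_zsmul, map_sum, map_zsmul,
        map_nsmul, Submodule.mkQ_apply]
    have hu : (⟨u, w', hw'⟩ : torsionLattice K M) =
        ∑ i, e i • b i + ⟨K *ᵥ v, M • v, (mulVec_smul _ _ _).symm⟩ := by
      ext1
      simp only [AddSubgroup.coe_add]
      rw [← mulVecLin_apply, hv]; abel
    refine ⟨e, ?_⟩
    rw [hχb]
    calc phaseF r K M s u = χ ⟨u, w', hw'⟩ := rfl
      _ = χ (∑ i, e i • b i) := by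
        rw [hu, AddChar.map_add_eq_mul]
        exact mul_right_eq_self₀.mpr (Or.inl (phaseF_mulVec hsymm hdet heven M s v))
  · rintro ⟨e, rfl⟩
    exact ⟨_, (∑ i, e i • b i).2, hχb e⟩

end

theorem relabeling_phase_image_is_cyclic_general (r k : ℕ) (K : Matrix (Fin r) (Fin r) ℤ)
    (hsymm : K.IsSymm) (hdet : K.det ≠ 0) (heven : ∀ i, Even (K i i))
    (M : ℕ) (hM : 1 ≤ M) (s : Fin r → ℤ)
    (a : Fin k → Fin r → ℤ) (n : Fin k → ℕ) (w : Fin k → Fin r → ℤ)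
    (hKw : ∀ i, n i • a i = K.mulVec (w i))
    (hgen : ∀ x : KQuot r K, ∃ c : Fin k → ℤ,
      x = ∑ i : Fin k, c i • (Submodule.Quotient.mk (a i) : KQuot r K))
    (hindep : ∀ c : Fin k → ℤ,
      (∑ i : Fin k, c i • (Submodule.Quotient.mk (a i) : KQuot r K)) = 0 ↔
        ∀ i, (n i : ℤ) ∣ c i) :
    {z : ℂ | ∃ u : Fin r → ℤ, (∃ w' : Fin r → ℤ, M • u = K.mulVec w') ∧
        z = phaseF r K M s u} =
      {z : ℂ | z ^ (Finset.univ.lcm fun i : Fin k =>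
        2 * Nat.gcd M (n i) /
          Int.gcd (2 * (Nat.gcd M (n i) : ℤ))
            (2 * (∑ j : Fin r, s j * w i j) +
              ((M / Nat.gcd M (n i) : ℕ) : ℤ) *
                (∑ j1 : Fin r, ∑ j2 : Fin r, w i j1 * K j1 j2 * w i j2))) = 1} := by
  have hM0 : M ≠ 0 := Nat.one_le_iff_ne_zero.mp hM
  ext z
  rw [Set.mem_ofPred_eq, Set.mem_ofPred_eq,
    exists_phaseF_eq_iff_exists_prod_zpow hsymm hdet heven hM0 s hKw hgen
      (fun c => (hindep c).mp),
    IsPrimitiveRoot.exists_eq_prod_zpow_iff_pow_lcm_eq_one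
      (fun i => isPrimitiveRoot_phaseF_nsmul_div_gcd hdet hM0 s (hKw i))
      (fun i => by exact_mod_cast Nat.div_intGcd_ne_zero (by positivity) _)]

/-- If the anyon group `ℤ^r/Kℤ^r` is the internal direct sum of cyclic groups generated by
the classes of `a i` of order `n i`, with `n i • a i = K w i`, then the image of the
relabeling phase on `M`-torsion anyons is the group of `P`-th roots of unity, with
`P = lcm_i (2dᵢ / gcd(2dᵢ, 2 sᵀwᵢ + (M/dᵢ) wᵢᵀK wᵢ))`, `dᵢ = gcd(M, nᵢ)`. -/
theorem relabeling_phase_image_is_cyclic (r k : ℕ) (K : Matrix (Fin r) (Fin r) ℤ)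
    (hsymm : K.IsSymm) (hdet : K.det ≠ 0) (heven : ∀ i, Even (K i i))
    (M : ℕ) (hM : 1 ≤ M) (s : Fin r → ℤ)
    (a : Fin k → Fin r → ℤ) (n : Fin k → ℕ) (w : Fin k → Fin r → ℤ)
    (hn : ∀ i, 0 < n i)
    (hKw : ∀ i, n i • a i = K.mulVec (w i))
    (hord : ∀ i, addOrderOf (Submodule.Quotient.mk (a i) : KQuot r K) = n i)
    (hgen : ∀ x : KQuot r K, ∃ c : Fin k → ℤ,
      x = ∑ i : Fin k, c i • (Submodule.Quotient.mk (a i) : KQuot r K))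
    (hindep : ∀ c : Fin k → ℤ,
      (∑ i : Fin k, c i • (Submodule.Quotient.mk (a i) : KQuot r K)) = 0 ↔
        ∀ i, (n i : ℤ) ∣ c i) :
    {z : ℂ | ∃ u : Fin r → ℤ, (∃ w' : Fin r → ℤ, M • u = K.mulVec w') ∧
        z = phaseF r K M s u} =
      {z : ℂ | z ^ (Finset.univ.lcm fun i : Fin k =>
        2 * Nat.gcd M (n i) /
          Int.gcd (2 * (Nat.gcd M (n i) : ℤ))
            (2 * (∑ j : Fin r, s j * w i j) +
              ((M / Nat.gcd M (n i) : ℕ) : ℤ) *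
                (∑ j1 : Fin r, ∑ j2 : Fin r, w i j1 * K j1 j2 * w i j2))) = 1} :=
  relabeling_phase_image_is_cyclic_general r k K hsymm hdet heven M hM s a n w hKw hgen hindep
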